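/- Let u = (p*, q*) ∈ ℕ² with p* < q*, and let c_∞ > 0 satisfy c_∞⁻¹ < q* (working with the normalization δ rather than 2δ). Suppose v_n = (p_n, q_n) ∈ ℕ² with q_n < p_n for all n and δ(u, v_n) decreases strictly to c_∞ with δ(u,v_n) > c_∞ for all n. Then this is impossible: only finitely many lattice points v lie below the line through u and (c_∞⁻¹, c_∞⁻¹), so δ(u, v_n) must stabilize, contradicting strict decrease. Conclusion: every strictly decreasing sequence of such δ-values converges to a limit of the form 1/q* (hence to an element of {1/N : N ∈ ℕ}) or stabilizes. -/

import Mathlib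

open Filter

/-!
Since `c < delta u v` is linear in `v` once denominators are cleared and `c q* > 1`, it confines
`v` below the diagonal to a bounded, hence finite, set of lattice points. A strictly
decreasing sequence `delta u (v n)` forces the `v n` to be pairwise distinct, which is impossible
in a finite set.
-/

/-- `delta u v` is the reciprocal of the diagonal coordinate of the point where the segment
`[u, v]` crosses the diagonal `{p = q}`. -/
noncomputable def delta (u v : ℕ × ℕ) : ℝ :=
  (((v.1 : ℝ) - v.2) + ((u.2 : ℝ) - u.1)) / ((u.2 : ℝ) * v.1 - (u.1 : ℝ) * v.2)

section

variable {u v : ℕ × ℕ} {c : ℝ}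

lemma delta_denom_pos (hu : u.1 < u.2) (hv : v.2 < v.1) :
    0 < (u.2 : ℝ) * v.1 - (u.1 : ℝ) * v.2 := by
  have hu' : (u.1 : ℝ) < u.2 := by exact_mod_cast hu
  have hv' : (v.2 : ℝ) < v.1 := by exact_mod_cast hv
  have hv0 : (0 : ℝ) ≤ v.2 := Nat.cast_nonneg _
  nlinarith

lemma lt_delta_iff (hu : u.1 < u.2) (hv : v.2 < v.1) :
    c < delta u v ↔
      (c * u.2 - 1) * ((v.1 : ℝ) - v.2) + c * ((u.2 : ℝ) - u.1) * v.2 < (u.2 : ℝ) - u.1 := by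
  rw [delta, lt_div_iff₀ (delta_denom_pos hu hv)]
  constructor <;> intro h <;> linarith

/-- Below the line through `u` and `(c⁻¹, c⁻¹)` we have `q < c⁻¹` and
`p - q < (q* - p*) / (c q* - 1)`. -/
lemma fst_lt_of_lt_delta (hu : u.1 < u.2) (hc : 0 < c) (hcu : c⁻¹ < u.2) (hv : v.2 < v.1)
    (h : c < delta u v) :
    (v.1 : ℝ) < c⁻¹ + ((u.2 : ℝ) - u.1) / (c * u.2 - 1) := by
  have hslope : 0 < c * u.2 - 1 := by
    have := mul_lt_mul_of_pos_left hcu hc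
    rw [mul_inv_cancel₀ hc.ne'] at this
    linarith
  have hu' : (0 : ℝ) < (u.2 : ℝ) - u.1 := sub_pos.mpr (by exact_mod_cast hu)
  have hv' : (0 : ℝ) < (v.1 : ℝ) - v.2 := sub_pos.mpr (by exact_mod_cast hv)
  have key := (lt_delta_iff hu hv).mp h
  have hq : (v.2 : ℝ) < c⁻¹ := by
    have : c * v.2 < 1 := by
      rw [← mul_lt_mul_iff_of_pos_left hu']
      nlinarith
    rwa [← one_div, lt_div_iff₀' hc]
  have hd : (v.1 : ℝ) - v.2 < ((u.2 : ℝ) - u.1) / (c * u.2 - 1) := by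
    rw [lt_div_iff₀ hslope]
    have : 0 ≤ c * ((u.2 : ℝ) - u.1) * v.2 := by positivity
    nlinarith
  linarith

theorem finite_setOf_lt_delta (hu : u.1 < u.2) (hc : 0 < c) (hcu : c⁻¹ < u.2) :
    {v : ℕ × ℕ | v.2 < v.1 ∧ c < delta u v}.Finite := by
  set N := ⌈c⁻¹ + ((u.2 : ℝ) - u.1) / (c * u.2 - 1)⌉₊
  refine (Set.finite_Iic (N, N)).subset ?_
  rintro v ⟨hv, h⟩
  have h1 : v.1 ≤ N :=
    (Nat.cast_le (α := ℝ)).mp ((fst_lt_of_lt_delta hu hc hcu hv h).le.trans (Nat.le_ceil _))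
  exact Prod.mk_le_mk.mpr ⟨h1, hv.le.trans h1⟩

end

theorem stmt8_general (p' q' : ℕ) (hpq : p' < q') (cinf : ℝ) (hc : 0 < cinf)
    (hcq : cinf⁻¹ < (q' : ℝ)) (v : ℕ → ℕ × ℕ) (hv : ∀ n, (v n).2 < (v n).1)
    (δ : ℕ → ℝ)
    (hδ : ∀ n, δ n =
      ((((v n).1 : ℝ) - (v n).2) + ((q' : ℝ) - p')) /
        ((q' : ℝ) * (v n).1 - (p' : ℝ) * (v n).2))
    (hanti : StrictAnti δ) (habove : ∀ n, cinf < δ n) :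
    False := by
  obtain rfl : δ = fun n => delta (p', q') (v n) := funext hδ
  have hinj : Function.Injective v :=
    Function.Injective.of_comp (f := delta (p', q')) hanti.injective
  have hfin : (Set.range v).Finite :=
    (finite_setOf_lt_delta (u := (p', q')) hpq hc hcq).subset <| by
      rintro _ ⟨n, rfl⟩
      exact ⟨hv n, habove n⟩
  exact Set.infinite_range_of_injective hinj hfin

/-- Impossibility of a strictly decreasing sequence of δ-values staying above its
limit c_∞ when c_∞⁻¹ < q*: with u = (p*,q*) ∈ ℕ², p* < q*, and v_n ∈ ℕ² strictly
below the diagonal, if δ(u,v_n) is strictly decreasing, always > c_∞, and converges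
to c_∞, then we reach a contradiction (only finitely many lattice points lie below
the line through u and (c_∞⁻¹, c_∞⁻¹), so the δ-values must stabilize). -/
theorem stmt8 (p' q' : ℕ) (hpq : p' < q') (cinf : ℝ) (hc : 0 < cinf)
    (hcq : cinf⁻¹ < (q' : ℝ)) (v : ℕ → ℕ × ℕ) (hv : ∀ n, (v n).2 < (v n).1)
    (δ : ℕ → ℝ)
    (hδ : ∀ n, δ n =
      ((((v n).1 : ℝ) - (v n).2) + ((q' : ℝ) - p')) /
        ((q' : ℝ) * (v n).1 - (p' : ℝ) * (v n).2))
    (hanti : StrictAnti δ) (habove : ∀ n, cinf < δ n)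
    (hlim : Tendsto δ atTop (nhds cinf)) :
    False :=
  stmt8_general p' q' hpq cinf hc hcq v hv δ hδ hanti habove
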